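/- Let f be a proper closed convex function on ℝⁿ and let x_i = prox_{α_i f}(x_{i−1}) with α_i > 0. Then the sequence of subgradient norms is nonincreasing: ‖(x_i − x_{i+1})/α_{i+1}‖ ≤ ‖(x_{i−1} − x_i)/α_i‖ for all i, where (x_{i−1} − x_i)/α_i ∈ ∂f(x_i). -/

import Mathlib

open scoped RealInnerProductSpace

/-- `g` is a subgradient of `f` at `y`. -/
def SubgradAt {n : ℕ} (f : EuclideanSpace ℝ (Fin n) → ℝ)
    (g y : EuclideanSpace ℝ (Fin n)) : Prop :=
  ∀ z, f y + ⟪g, z - y⟫ ≤ f z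

/-!
The optimality condition of the proximal step `x_i = prox_{α_i f}(x_{i-1})` says that
`g_i = (x_{i-1} - x_i)/α_i` is a subgradient of `f` at `x_i`. Monotonicity of the subdifferential
applied at `x_i` and `x_{i+1}` gives
`0 ≤ ⟪g_i - g_{i+1}, x_i - x_{i+1}⟫ = α_{i+1} ⟪g_i - g_{i+1}, g_{i+1}⟫`, so
`‖g_{i+1}‖² ≤ ⟪g_i, g_{i+1}⟫ ≤ ‖g_i‖ ‖g_{i+1}‖`.
-/

lemma nonpos_of_forall_mul_le_sq_mul {c d : ℝ}
    (h : ∀ t ∈ Set.Ioo (0 : ℝ) 1, t * c ≤ t ^ 2 * d) : c ≤ 0 := by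
  have hle : ∀ᶠ t in nhdsWithin (0 : ℝ) (Set.Ioi 0), c ≤ t * d := by
    filter_upwards [Ioo_mem_nhdsGT (zero_lt_one' ℝ)] with t ht
    exact le_of_mul_le_mul_left (by linarith [h t ht]) ht.1
  have htend : Filter.Tendsto (fun t : ℝ => t * d) (nhdsWithin 0 (Set.Ioi 0)) (nhds 0) := by
    simpa using ((continuous_mul_const d).tendsto 0).mono_left nhdsWithin_le_nhds
  exact ge_of_tendsto htend hle

lemma norm_le_of_norm_sq_le_inner {E : Type*} [NormedAddCommGroup E] [InnerProductSpace ℝ E]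
    {u v : E} (h : ‖v‖ ^ 2 ≤ ⟪u, v⟫) : ‖v‖ ≤ ‖u‖ := by
  have := h.trans (real_inner_le_norm u v)
  nlinarith [norm_nonneg u, norm_nonneg v]

section InnerProductSpace

variable {E : Type*} [NormedAddCommGroup E] [InnerProductSpace ℝ E] {f : E → ℝ}

lemma ConvexOn.inner_sub_le_of_isMinOn_prox (hconv : ConvexOn ℝ Set.univ f) {a : ℝ}
    (ha : 0 < a) {w y : E} (hmin : IsMinOn (fun z => a * f z + ‖z - w‖ ^ 2 / 2) Set.univ y)
    (z : E) : ⟪w - y, z - y⟫ ≤ a * (f z - f y) := by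
  suffices ⟪w - y, z - y⟫ - a * (f z - f y) ≤ 0 by linarith
  -- Compare the objective at `y` with its value at `y + t • (z - y)`; the quadratic term is
  -- `O(t²)`, so it disappears as `t → 0`.
  refine nonpos_of_forall_mul_le_sq_mul (d := ‖z - y‖ ^ 2 / 2) fun t ht => ?_
  have hseg : f (y + t • (z - y)) ≤ (1 - t) * f y + t * f z := by
    have := hconv.2 (Set.mem_univ y) (Set.mem_univ z) (show 0 ≤ 1 - t by linarith [ht.2])
      ht.1.le (by ring)
    rwa [show (1 - t) • y + t • z = y + t • (z - y) by module, smul_eq_mul, smul_eq_mul] at this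
  have hnorm : ‖y + t • (z - y) - w‖ ^ 2
      = ‖w - y‖ ^ 2 - 2 * t * ⟪w - y, z - y⟫ + t ^ 2 * ‖z - y‖ ^ 2 := by
    rw [show y + t • (z - y) - w = -(w - y) + t • (z - y) by abel, norm_add_sq_real,
      inner_neg_left, real_inner_smul_right, norm_smul, norm_neg, Real.norm_eq_abs,
      abs_of_pos ht.1]
    ring
  have hcmp : a * f y + ‖y - w‖ ^ 2 / 2
      ≤ a * f (y + t • (z - y)) + ‖y + t • (z - y) - w‖ ^ 2 / 2 := hmin (Set.mem_univ _)
  rw [norm_sub_rev y w, hnorm] at hcmp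
  nlinarith [mul_le_mul_of_nonneg_left hseg ha.le]

lemma ConvexOn.subgradient_of_isMinOn_prox (hconv : ConvexOn ℝ Set.univ f) {a : ℝ}
    (ha : 0 < a) {w y : E} (hmin : IsMinOn (fun z => a * f z + ‖z - w‖ ^ 2 / 2) Set.univ y)
    (z : E) : f y + ⟪a⁻¹ • (w - y), z - y⟫ ≤ f z := by
  have h : a⁻¹ * ⟪w - y, z - y⟫ ≤ f z - f y :=
    (inv_mul_le_iff₀ ha).2 (hconv.inner_sub_le_of_isMinOn_prox ha hmin z)
  rw [real_inner_smul_left]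
  linarith

lemma inner_sub_sub_nonneg_of_subgradient {g g' x x' : E}
    (hg : ∀ z, f x + ⟪g, z - x⟫ ≤ f z) (hg' : ∀ z, f x' + ⟪g', z - x'⟫ ≤ f z) :
    0 ≤ ⟪g - g', x - x'⟫ := by
  have h := hg x'
  have h' := hg' x
  rw [← neg_sub x x', inner_neg_right] at h
  rw [inner_sub_left]
  linarith

lemma norm_le_of_subgradient_of_prox_step {g x x' : E} {a : ℝ} (ha : 0 < a)
    (hg : ∀ z, f x + ⟪g, z - x⟫ ≤ f z) (hg' : ∀ z, f x' + ⟪a⁻¹ • (x - x'), z - x'⟫ ≤ f z) :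
    ‖a⁻¹ • (x - x')‖ ≤ ‖g‖ := by
  set g' := a⁻¹ • (x - x')
  have hx : x - x' = a • g' := by simp [g', smul_smul, ha.ne']
  have hmono := inner_sub_sub_nonneg_of_subgradient hg hg'
  rw [hx, real_inner_smul_right, inner_sub_left, real_inner_self_eq_norm_sq] at hmono
  exact norm_le_of_norm_sq_le_inner (by nlinarith)

end InnerProductSpace

theorem stmt17_general {n : ℕ} (f : EuclideanSpace ℝ (Fin n) → ℝ)
    (hconv : ConvexOn ℝ Set.univ f)
    (N : ℕ) (α : ℕ → ℝ) (hα : ∀ i ∈ Finset.Icc 1 N, 0 < α i)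
    (x : ℕ → EuclideanSpace ℝ (Fin n))
    (hiter : ∀ i ∈ Finset.Icc 1 N,
      IsMinOn (fun z => α i * f z + ‖z - x (i - 1)‖ ^ 2 / 2) Set.univ (x i)) :
    ∀ i, 1 ≤ i → i + 1 ≤ N →
      SubgradAt f ((α i)⁻¹ • (x (i - 1) - x i)) (x i) ∧
      ‖(α (i + 1))⁻¹ • (x i - x (i + 1))‖ ≤ ‖(α i)⁻¹ • (x (i - 1) - x i)‖ := by
  intro i hi hiN
  have hsubgrad : ∀ j ∈ Finset.Icc 1 N, SubgradAt f ((α j)⁻¹ • (x (j - 1) - x j)) (x j) :=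
    fun j hj => hconv.subgradient_of_isMinOn_prox (hα j hj) (hiter j hj)
  have hi' : i ∈ Finset.Icc 1 N := Finset.mem_Icc.mpr ⟨hi, by omega⟩
  have hi1 : i + 1 ∈ Finset.Icc 1 N := Finset.mem_Icc.mpr ⟨by omega, hiN⟩
  have hnext := hsubgrad (i + 1) hi1
  rw [Nat.add_sub_cancel] at hnext
  exact ⟨hsubgrad i hi',
    norm_le_of_subgradient_of_prox_step (hα _ hi1) (hsubgrad i hi') hnext⟩

/-- Along the PPA iterates the residual subgradient norms are nonincreasing:
`‖(x_i - x_{i+1})/α_{i+1}‖ ≤ ‖(x_{i-1} - x_i)/α_i‖`, where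
`(x_{i-1} - x_i)/α_i ∈ ∂f(x_i)`. -/
theorem stmt17 {n : ℕ} (f : EuclideanSpace ℝ (Fin n) → ℝ)
    (hconv : ConvexOn ℝ Set.univ f) (hlsc : LowerSemicontinuous f)
    (N : ℕ) (α : ℕ → ℝ) (hα : ∀ i ∈ Finset.Icc 1 N, 0 < α i)
    (x : ℕ → EuclideanSpace ℝ (Fin n))
    (hiter : ∀ i ∈ Finset.Icc 1 N,
      IsMinOn (fun z => α i * f z + ‖z - x (i - 1)‖ ^ 2 / 2) Set.univ (x i)) :
    ∀ i, 1 ≤ i → i + 1 ≤ N →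
      SubgradAt f ((α i)⁻¹ • (x (i - 1) - x i)) (x i) ∧
      ‖(α (i + 1))⁻¹ • (x i - x (i + 1))‖ ≤ ‖(α i)⁻¹ • (x (i - 1) - x i)‖ :=
  stmt17_general f hconv N α hα x hiter
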